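/- arXiv:2602.17355 — 2 statements merged into one kernel-verified Lean document; each statement's English description precedes it below -/
import Mathlib

section
/- The precomposition functor p^* : Fun(R, Set) → Fun(D_R, Set) given by precomposing with p is fully faithful; that is, the functor p : D_R → R is absolutely dense. -/
/-!
A transformation `η : p ⋙ G ⟶ p ⋙ H` descends along an essentially surjective `p` once every
`f : p X ⟶ p Y` is compatible, i.e. every such `η` has a naturality square at `f`; compatible
morphisms include the `p`-images and are closed under composition. In `D_R` the component of `η`
at `x → y` equals the one at the identity of `y`, and each object `m` of `D_R` makes `p₀ m`
compatible between the identities at its ends. Every object of `F_≃(R)` lies in the image of `i`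
(the pushout legs are jointly surjective on objects, and `i₀ x = i (c x)`), and every morphism of
`R` is `p₀` of a composite `i w ≫ i (c k) ≫ i w'⁻¹` whose factors are objects of `D_R`: two free
isomorphisms and an arrow from `R₀`.
-/

open CategoryTheory

universe u

namespace Unrolling

/-- A morphism is "an identity" if it is the `eqToHom` of an equality of objects. -/
def IsIdArrow {C : Type*} [Category C] {x y : C} (m : x ⟶ y) : Prop :=
  ∃ h : x = y, m = eqToHom h

/-- A morphism lies in the image of the functor `F` (up to the evident equalities of objects). -/
def InImg {A C : Type*} [Category A] [Category C] (F : A ⥤ C) {x y : C} (m : x ⟶ y) : Prop :=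
  ∃ (a b : A) (k : a ⟶ b) (ha : F.obj a = x) (hb : F.obj b = y),
    m = eqToHom ha.symm ≫ F.map k ≫ eqToHom hb

variable {R₀ R Fs : Type u} [SmallCategory R₀] [SmallCategory R] [SmallCategory Fs]

/-- The free category comonad applied to a functor `c : R₀ ⥤ R`, i.e. the induced functor
between path categories. -/
def freeMap (c : R₀ ⥤ R) : Paths R₀ ⥤ Paths R where
  obj x := c.obj x
  map f := c.toPrefunctor.mapPath f
  map_id _ := rfl
  map_comp f g := c.toPrefunctor.mapPath_comp f g

/-- A "free isomorphism": the image under `i : Paths R ⥤ F_≃(R)` of a length-one path whose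
arrow is an isomorphism of `R`. -/
def FreeIso (i : Paths R ⥤ Fs) {x y : Fs} (m : x ⟶ y) : Prop :=
  ∃ (a b : R) (f : a ⟶ b) (ha : i.obj ((Paths.of R).obj a) = x) (hb : i.obj ((Paths.of R).obj b) = y),
    IsIso f ∧ m = eqToHom ha.symm ≫ i.map ((Paths.of R).map f) ≫ eqToHom hb

/-- The twisted arrow category of `C`: objects are morphisms of `C`. -/
structure Tw (C : Type*) [Category C] where
  left : C
  right : C
  hom : left ⟶ right

/-- Morphisms `f → f'` in the twisted arrow category: pairs `(u, v)` with `f' = u ≫ f ≫ v`. -/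
@[ext]
structure TwHom {C : Type*} [Category C] (X Y : Tw C) where
  u : Y.left ⟶ X.left
  v : X.right ⟶ Y.right
  w : Y.hom = u ≫ X.hom ≫ v

instance {C : Type*} [Category C] : Category (Tw C) where
  Hom := TwHom
  id X := ⟨𝟙 _, 𝟙 _, by simp⟩
  comp {X Y Z} f g := ⟨g.u ≫ f.u, f.v ≫ g.v, by rw [g.w, f.w]; simp⟩
  id_comp f := by apply TwHom.ext <;> simp [CategoryStruct.id, CategoryStruct.comp]
  comp_id f := by apply TwHom.ext <;> simp [CategoryStruct.id, CategoryStruct.comp]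
  assoc f g h := by apply TwHom.ext <;> simp [CategoryStruct.comp]

/-- The defining property of the objects of `D_R` inside the twisted arrow category of
`F_≃(R)`: those morphisms factoring as (identity or image of `R₀`) followed by
(identity or free isomorphism). -/
def InD (i₀ : R₀ ⥤ Fs) (i : Paths R ⥤ Fs) (X : Tw Fs) : Prop :=
  ∃ (z : Fs) (g : X.left ⟶ z) (h : z ⟶ X.right),
    X.hom = g ≫ h ∧ (IsIdArrow g ∨ InImg i₀ g) ∧ (IsIdArrow h ∨ FreeIso i h)

/-- The category `D_R`, a full subcategory of the twisted arrow category of `F_≃(R)`. -/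
abbrev DR (i₀ : R₀ ⥤ Fs) (i : Paths R ⥤ Fs) := ObjectProperty.FullSubcategory (InD i₀ i)

/-- The projection `p : D_R ⥤ R`, sending an object `f : x ⟶ y` to `p₀(y)` and a morphism
`(u, v)` to `p₀(v)`. -/
def pFun (i₀ : R₀ ⥤ Fs) (i : Paths R ⥤ Fs) (p₀ : Fs ⥤ R) : DR i₀ i ⥤ R where
  obj X := p₀.obj X.obj.right
  map {X Y} t := p₀.map (TwHom.v t.hom)
  map_id X := p₀.map_id _
  map_comp f g := p₀.map_comp _ _

section Compatible

variable {C D : Type*} [Category C] [Category D] (E : Type*) [Category E] (p : D ⥤ C)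

def IsCompatible {X Y : D} (f : p.obj X ⟶ p.obj Y) : Prop :=
  ∀ ⦃G H : C ⥤ E⦄ (η : p ⋙ G ⟶ p ⋙ H), η.app X ≫ H.map f = G.map f ≫ η.app Y

variable {E p}

lemma isCompatible_map {X Y : D} (g : X ⟶ Y) : IsCompatible E p (p.map g) :=
  fun _ _ η => (η.naturality g).symm

lemma IsCompatible.comp {X Y Z : D} {f : p.obj X ⟶ p.obj Y} {g : p.obj Y ⟶ p.obj Z}
    (hf : IsCompatible E p f) (hg : IsCompatible E p g) : IsCompatible E p (f ≫ g) := by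
  intro G H η
  rw [H.map_comp, G.map_comp, reassoc_of% hf η, hg η, Category.assoc]

theorem faithful_whiskeringLeft_obj_of_essSurj [p.EssSurj] :
    ((Functor.whiskeringLeft D C E).obj p).Faithful where
  map_injective {G H} θ θ' h := by
    ext r
    let e := p.objObjPreimageIso r
    rw [← cancel_epi (G.map e.hom), θ.naturality, θ'.naturality]
    exact congrArg (· ≫ H.map e.hom) (NatTrans.congr_app h (p.objPreimage r))

theorem full_whiskeringLeft_obj_of_isCompatible [p.EssSurj]
    (h : ∀ (X Y : D) (f : p.obj X ⟶ p.obj Y), IsCompatible E p f) :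
    ((Functor.whiskeringLeft D C E).obj p).Full where
  map_surjective {G H} η := by
    let e := p.objObjPreimageIso
    refine ⟨{ app r := G.map (e r).inv ≫ η.app (p.objPreimage r) ≫ H.map (e r).hom,
              naturality r r' f := ?_ }, ?_⟩
    · have := h _ _ ((e r).hom ≫ f ≫ (e r').inv) η
      rw [← cancel_epi (G.map (e r).hom), ← G.map_comp_assoc, ← G.map_comp_assoc,
        Category.assoc, ← reassoc_of% this]
      simp
    · ext X
      change G.map _ ≫ η.app _ ≫ H.map _ = η.app X
      rw [h _ _ (e (p.obj X)).hom η, ← G.map_comp_assoc, Iso.inv_hom_id, G.map_id, Category.id_comp]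

end Compatible

lemma pathComposition_map_of_map {C : Type*} [Category C] {a b : C} (f : a ⟶ b) :
    (pathComposition C).map ((Paths.of C).map f) = f :=
  composePath_toPath f

lemma exists_obj_eq_of_pushout {A B C P : Type u} [SmallCategory A] [SmallCategory B]
    [SmallCategory C] [SmallCategory P] {F : A ⥤ B} {G : A ⥤ C} {i₁ : B ⥤ P} {i₂ : C ⥤ P}
    (hcomm : F ⋙ i₁ = G ⋙ i₂)
    (huniv : ∀ (T : Cat.{u, u}) (q₁ : B ⥤ T) (q₂ : C ⥤ T), F ⋙ q₁ = G ⋙ q₂ →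
      ∃! d : P ⥤ T, i₁ ⋙ d = q₁ ∧ i₂ ⋙ d = q₂)
    (y : P) : (∃ b, i₁.obj b = y) ∨ ∃ c, i₂.obj c = y := by
  let T := Cat.of (AsSmall.{u} (Codiscrete Prop))
  let toT (S : P → Prop) : P ⥤ T := Codiscrete.functor S ⋙ AsSmall.up
  have toT_comp_eq {X : Type u} [SmallCategory X] (j : X ⥤ P) {S S' : P → Prop}
      (h : ∀ x, S (j.obj x) ↔ S' (j.obj x)) : j ⋙ toT S = j ⋙ toT S' :=
    CategoryTheory.Functor.ext
      (fun x => congrArg (fun q => (AsSmall.up.obj (Codiscrete.mk q) : T)) (propext (h x)))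
      (fun _ _ _ => rfl)
  let S (z : P) : Prop := (∃ b, i₁.obj b = z) ∨ ∃ c, i₂.obj c = z
  -- `toT S` and `toT True` restrict to the same cocone, so uniqueness identifies them.
  have hS : toT S = toT fun _ => True :=
    (huniv T (i₁ ⋙ toT fun _ => True) (i₂ ⋙ toT fun _ => True)
      (congrArg (· ⋙ toT fun _ => True) hcomm)).unique
      ⟨toT_comp_eq i₁ fun b => iff_true_intro (Or.inl ⟨b, rfl⟩),
        toT_comp_eq i₂ fun c => iff_true_intro (Or.inr ⟨c, rfl⟩)⟩ ⟨rfl, rfl⟩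
  exact of_eq_true (congrArg (fun t : T => (ULift.down t : Codiscrete Prop).as)
    (Functor.congr_obj hS y))

section DR

variable {E : Type*} [Category E] (i₀ : R₀ ⥤ Fs) (i : Paths R ⥤ Fs) (p₀ : Fs ⥤ R)

def idObj (y : Fs) : DR i₀ i :=
  ⟨⟨y, y, 𝟙 y⟩, y, 𝟙 y, 𝟙 y, (Category.comp_id _).symm, Or.inl ⟨rfl, rfl⟩, Or.inl ⟨rfl, rfl⟩⟩

def homOfIdObjLeft (X : DR i₀ i) : idObj i₀ i X.obj.left ⟶ X :=
  ⟨⟨𝟙 _, X.obj.hom, by simp [idObj]⟩⟩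

def homOfIdObjRight (X : DR i₀ i) : idObj i₀ i X.obj.right ⟶ X :=
  ⟨⟨X.obj.hom, 𝟙 _, by simp [idObj]⟩⟩

lemma inD_map_of_isIso {a b : R} (f : a ⟶ b) [IsIso f] :
    InD i₀ i ⟨_, _, i.map ((Paths.of R).map f)⟩ :=
  ⟨_, 𝟙 _, _, (Category.id_comp _).symm, Or.inl ⟨rfl, rfl⟩,
    Or.inr ⟨a, b, f, rfl, rfl, inferInstance, by simp⟩⟩

lemma inD_map_map {c : R₀ ⥤ R} (hcomm : pathComposition R₀ ⋙ i₀ = freeMap c ⋙ i)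
    {x y : R₀} (k : x ⟶ y) : InD i₀ i ⟨_, _, i.map ((Paths.of R).map (c.map k))⟩ := by
  refine ⟨_, _, 𝟙 _, (Category.comp_id _).symm,
    Or.inr ⟨x, y, k, Functor.congr_obj hcomm x, Functor.congr_obj hcomm y, ?_⟩, Or.inl ⟨rfl, rfl⟩⟩
  have h := Functor.congr_hom hcomm.symm ((Paths.of R₀).map k)
  rwa [Functor.comp_map, Functor.comp_map, pathComposition_map_of_map] at h

lemma pFun_map_homOfIdObjRight (X : DR i₀ i) :
    (pFun i₀ i p₀).map (homOfIdObjRight i₀ i X) = 𝟙 _ :=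
  p₀.map_id _

lemma isCompatible_idObj_right (X : DR i₀ i) :
    IsCompatible E (pFun i₀ i p₀) (X := X) (Y := idObj i₀ i X.obj.right) (𝟙 _) :=
  fun G H η => by
    -- `p.obj X` and `p.obj (idObj X.obj.right)` agree only after unfolding, hence `erw`.
    have h := η.naturality (homOfIdObjRight i₀ i X)
    rw [Functor.comp_map, Functor.comp_map, pFun_map_homOfIdObjRight] at h
    erw [G.map_id, H.map_id, Category.id_comp, Category.comp_id] at h
    erw [G.map_id, H.map_id, Category.id_comp, Category.comp_id, h]

lemma isCompatible_map_of_inD {u v : Fs} {m : u ⟶ v} (hm : InD i₀ i ⟨u, v, m⟩) :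
    IsCompatible E (pFun i₀ i p₀) (X := idObj i₀ i u) (Y := idObj i₀ i v) (p₀.map m) := by
  have := (isCompatible_map (E := E) (p := pFun i₀ i p₀) (homOfIdObjLeft i₀ i ⟨_, hm⟩)).comp
    (isCompatible_idObj_right i₀ i p₀ ⟨_, hm⟩)
  erw [Category.comp_id] at this
  exact this

lemma surjective_obj {c : R₀ ⥤ R} (hcomm : pathComposition R₀ ⋙ i₀ = freeMap c ⋙ i)
    (huniv : ∀ (T : Cat.{u, u}) (q₀ : R₀ ⥤ T) (q : Paths R ⥤ T),
      pathComposition R₀ ⋙ q₀ = freeMap c ⋙ q →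
      ∃! d : Fs ⥤ T, i₀ ⋙ d = q₀ ∧ i ⋙ d = q) :
    Function.Surjective i.obj := by
  intro y
  obtain ⟨x, rfl⟩ | h := exists_obj_eq_of_pushout (F := pathComposition R₀) (G := freeMap c)
    hcomm huniv y
  · exact ⟨c.obj x, (Functor.congr_obj hcomm x).symm⟩
  · exact h

lemma isCompatible_idObj {c : R₀ ⥤ R}
    (hlift : ∀ {a b : R} (f : a ⟶ b), ∃ (x y : R₀) (k : x ⟶ y)
      (w : a ≅ c.obj x) (w' : b ≅ c.obj y), w.hom ≫ c.map k = f ≫ w'.hom)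
    (hcomm : pathComposition R₀ ⋙ i₀ = freeMap c ⋙ i) (hp₂ : i ⋙ p₀ = pathComposition R)
    (hi : Function.Surjective i.obj) (u v : Fs) (f : p₀.obj u ⟶ p₀.obj v) :
    IsCompatible E (pFun i₀ i p₀) (X := idObj i₀ i u) (Y := idObj i₀ i v) f := by
  obtain ⟨a, rfl⟩ : ∃ a : R, i.obj a = u := hi u
  obtain ⟨b, rfl⟩ : ∃ b : R, i.obj b = v := hi v
  have hobj (r : R) : p₀.obj (i.obj r) = r := Functor.congr_obj hp₂ r
  obtain ⟨x, y, k, w, w', hw⟩ := hlift (eqToHom (hobj a).symm ≫ f ≫ eqToHom (hobj b))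
  have hP : p₀.map (i.map ((Paths.of R).map w.hom ≫ (Paths.of R).map (c.map k) ≫
      (Paths.of R).map w'.inv)) = f := by
    rw [← Functor.comp_map, Functor.congr_hom hp₂]
    simp only [Functor.map_comp, pathComposition_map_of_map]
    show eqToHom _ ≫ (w.hom ≫ c.map k ≫ w'.inv) ≫ eqToHom _ = f
    rw [reassoc_of% hw]
    simp only [Category.assoc, Iso.hom_inv_id, Category.comp_id]
    erw [eqToHom_trans_assoc, eqToHom_trans, eqToHom_refl, eqToHom_refl, Category.id_comp,
      Category.comp_id]
  simp only [← hP, Functor.map_comp]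
  exact (isCompatible_map_of_inD i₀ i p₀ (inD_map_of_isIso i₀ i w.hom)).comp
    ((isCompatible_map_of_inD i₀ i p₀ (inD_map_map i₀ i hcomm k)).comp
      (isCompatible_map_of_inD i₀ i p₀ (inD_map_of_isIso i₀ i w'.inv)))

lemma essSurj_pFun (hp₂ : i ⋙ p₀ = pathComposition R) : (pFun i₀ i p₀).EssSurj :=
  ⟨fun r => ⟨idObj i₀ i (i.obj r), ⟨eqToIso (Functor.congr_obj hp₂ r)⟩⟩⟩

lemma isCompatible_of_isCompatible_idObj
    (h : ∀ (u v : Fs) (f : p₀.obj u ⟶ p₀.obj v),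
      IsCompatible E (pFun i₀ i p₀) (X := idObj i₀ i u) (Y := idObj i₀ i v) f)
    (X Y : DR i₀ i) (f : (pFun i₀ i p₀).obj X ⟶ (pFun i₀ i p₀).obj Y) :
    IsCompatible E (pFun i₀ i p₀) f := by
  have := ((isCompatible_idObj_right i₀ i p₀ X).comp (h _ _ f)).comp
    (isCompatible_map (E := E) (homOfIdObjRight i₀ i Y))
  erw [Category.id_comp, pFun_map_homOfIdObjRight, Category.comp_id] at this
  exact this

end DR

theorem precomposition_fullyFaithful_general
    (c : R₀ ⥤ R)
    (hlift : ∀ {a b : R} (f : a ⟶ b), ∃ (x y : R₀) (k : x ⟶ y)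
      (w : a ≅ c.obj x) (w' : b ≅ c.obj y), w.hom ≫ c.map k = f ≫ w'.hom)
    (i₀ : R₀ ⥤ Fs) (i : Paths R ⥤ Fs)
    (hcomm : pathComposition R₀ ⋙ i₀ = freeMap c ⋙ i)
    (huniv : ∀ (T : Cat.{u, u}) (q₀ : R₀ ⥤ T) (q : Paths R ⥤ T),
      pathComposition R₀ ⋙ q₀ = freeMap c ⋙ q →
      ∃! d : Fs ⥤ T, i₀ ⋙ d = q₀ ∧ i ⋙ d = q)
    (p₀ : Fs ⥤ R) (hp₂ : i ⋙ p₀ = pathComposition R) :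
    ((Functor.whiskeringLeft (DR i₀ i) R (Type u)).obj (pFun i₀ i p₀)).Full ∧
    ((Functor.whiskeringLeft (DR i₀ i) R (Type u)).obj (pFun i₀ i p₀)).Faithful := by
  have := essSurj_pFun i₀ i p₀ hp₂
  have hi := surjective_obj i₀ i hcomm huniv
  exact ⟨full_whiskeringLeft_obj_of_isCompatible <| isCompatible_of_isCompatible_idObj i₀ i p₀ <|
      isCompatible_idObj i₀ i p₀ hlift hcomm hp₂ hi,
    faithful_whiskeringLeft_obj_of_essSurj⟩

/-- Given a functor `c : R₀ ⥤ R` along which every morphism of `R` lifts up to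
isomorphism, form the pushout `F_≃(R)` (here `Fs`, with structure maps `i₀ : R₀ ⥤ Fs` and
`i : Paths R ⥤ Fs`, satisfying the strict universal property of the pushout in `Cat` of
`ε : Paths R₀ ⥤ R₀` along `F(c) : Paths R₀ ⥤ Paths R`), the induced functor `p₀ : Fs ⥤ R`,
and the projection `p : D_R ⥤ R`.  Then the precomposition functor
`p^* : (R ⥤ Type u) ⥤ (D_R ⥤ Type u)` is fully faithful, i.e. `p` is absolutely dense. -/
theorem precomposition_fullyFaithful
    (c : R₀ ⥤ R)
    (hlift : ∀ {a b : R} (f : a ⟶ b), ∃ (x y : R₀) (k : x ⟶ y)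
      (w : a ≅ c.obj x) (w' : b ≅ c.obj y), w.hom ≫ c.map k = f ≫ w'.hom)
    (i₀ : R₀ ⥤ Fs) (i : Paths R ⥤ Fs)
    (hcomm : pathComposition R₀ ⋙ i₀ = freeMap c ⋙ i)
    (huniv : ∀ (T : Cat.{u, u}) (q₀ : R₀ ⥤ T) (q : Paths R ⥤ T),
      pathComposition R₀ ⋙ q₀ = freeMap c ⋙ q →
      ∃! d : Fs ⥤ T, i₀ ⋙ d = q₀ ∧ i ⋙ d = q)
    (p₀ : Fs ⥤ R) (hp₁ : i₀ ⋙ p₀ = c) (hp₂ : i ⋙ p₀ = pathComposition R) :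
    ((Functor.whiskeringLeft (DR i₀ i) R (Type u)).obj (pFun i₀ i p₀)).Full ∧
    ((Functor.whiskeringLeft (DR i₀ i) R (Type u)).obj (pFun i₀ i p₀)).Faithful :=
  precomposition_fullyFaithful_general c hlift i₀ i hcomm huniv p₀ hp₂

end Unrolling
end

section
/- For any category C, the diagonal functor Δ : C → C × C (sending an object x to (x, x) and a morphism f to (f, f)) is an isofibration if and only if C is gaunt, i.e., C admits no non-trivial isomorphisms. -/
open CategoryTheory

universe v u

/-- A functor `P : E ⥤ B` is an isofibration if every isomorphism `φ : P(e) ≅ b` of `B` lifts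
to an isomorphism `ψ : e ≅ e'` of `E` with `P(ψ) = φ` (in particular `P(e') = b`). -/
def IsIsofibration {E : Type*} [Category E] {B : Type*} [Category B] (P : E ⥤ B) : Prop :=
  ∀ (e : E) (b : B) (φ : P.obj e ≅ b),
    ∃ (e' : E) (ψ : e ≅ e') (h : P.obj e' = b), P.map ψ.hom ≫ eqToHom h = φ.hom

/-- A category is gaunt if every isomorphism is an identity. -/
def IsGaunt (C : Type*) [Category C] : Prop :=
  ∀ {x y : C} (f : x ≅ y), ∃ h : x = y, f.hom = eqToHom h


private lemma fst_eqToHom {C D : Type*} [Category C] [Category D] {X Y : C × D} (h : X = Y) :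
    (eqToHom h).1 = eqToHom (congrArg Prod.fst h) := by subst h; rfl

private lemma snd_eqToHom {C D : Type*} [Category C] [Category D] {X Y : C × D} (h : X = Y) :
    (eqToHom h).2 = eqToHom (congrArg Prod.snd h) := by subst h; rfl

/-- For any category `C`, the diagonal functor `Δ : C ⥤ C × C` is an
isofibration if and only if `C` is gaunt, i.e. admits no non-trivial isomorphisms. -/
theorem diag_isofibration_iff_gaunt (C : Type u) [Category.{v} C] :
    IsIsofibration (Functor.diag C) ↔ IsGaunt C := by
  constructor
  · intro hP x y f
    obtain ⟨e', ψ, h, hψ⟩ := hP x (x, y) ((Iso.refl x).prod f)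
    have h1 : e' = x := congrArg Prod.fst h
    have h2 : e' = y := congrArg Prod.snd h
    have hfst : ψ.hom ≫ eqToHom h1 = 𝟙 x := by
      have := congrArg Prod.fst hψ
      simpa [fst_eqToHom] using this
    have hsnd : ψ.hom ≫ eqToHom h2 = f.hom := by
      have := congrArg Prod.snd hψ
      simpa [snd_eqToHom] using this
    refine ⟨h1.symm.trans h2, ?_⟩
    subst h1
    subst h2
    rw [← hsnd]
    simpa using hfst
  · intro hG e b φ
    obtain ⟨h1, hf1⟩ := hG ((CategoryTheory.Prod.fst C C).mapIso φ)
    obtain ⟨h2, hf2⟩ := hG ((CategoryTheory.Prod.snd C C).mapIso φ)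
    refine ⟨e, Iso.refl e, Prod.ext h1 h2, ?_⟩
    apply Prod.ext
    · simpa [fst_eqToHom] using hf1.symm
    · simpa [snd_eqToHom] using hf2.symm
end
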